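/- arXiv:1609.00973 — 2 statements merged into one kernel-verified Lean document; each statement's English description precedes it below -/
import Mathlib

section
/- Let Λ be a proper Λ-sequence and f : [0,1] → ℝ. Then ‖B_nf − f‖_Λ → 0 as n → ∞ (equivalently V_Λ(B_nf − f) → 0 in [0,∞], since B_nf(0) = f(0)) if and only if f is continuous, of bounded Λ-variation, and continuous in Λ-variation. -/
/-!
A single gap gives `|g x - g 0| ≤ λ_0 V_Λ(g)`, so `V_Λ(B_n f - f) → 0` forces `B_n f → f`
uniformly and `f` is continuous. Since `B_n f` is Lipschitz, `V_{Λ_(m)}(B_n f) = O(1/λ_m)`; with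
`V_{Λ_(m)}(f) ≤ V_{Λ_(m)}(B_n f) + V_Λ(B_n f - f)` this gives `V_Λ(f) < ∞` and continuity in
Λ-variation.

Conversely, in a Λ-variation sum the at most `m` gaps weighted by `λ_0, …, λ_{m-1}` contribute at
most `2m ‖g‖_∞ / λ_0` and the others at most `V_{Λ_(m)}(g)`. For `g = B_n f - f` the first part
tends to `0` by Bernstein's theorem, and the second is at most `2 V_{Λ_(m)}(f)` because `B_n` does
not increase Λ-variation: `B_n f(x) = 𝔼 f(N_x / n)`, where `N_x` counts how many of `n`
independent uniform points lie below `x`, and for a fixed sample the values `N_{x_j} / n` again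
form a nondecreasing partition.
-/

open Filter Set MeasureTheory
open scoped ENNReal Topology

/-- `l` is a Λ-sequence (indexed from 0, so `l 0` plays the role of `λ₁`):
a nondecreasing sequence of positive reals whose reciprocals have divergent sum. -/
def IsLambdaSeq (l : ℕ → ℝ) : Prop :=
  Monotone l ∧ (∀ n, 0 < l n) ∧ ¬ Summable (fun n => 1 / l n)

/-- A proper Λ-sequence: additionally `λₙ → ∞`. -/
def IsProperLambdaSeq (l : ℕ → ℝ) : Prop :=
  IsLambdaSeq l ∧ Tendsto l atTop atTop

/-- The Λ-variation of `f` computed over partition points taken from `K`: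
the supremum of `∑ⱼ |f(x_{j+1}) - f(x_j)| / λ_{β(j)}` over all `m`, all nondecreasing
tuples `x₁ ≤ … ≤ x_{m+1}` of points of `K` and all permutations `β` of the gaps. -/
noncomputable def lamVarOn (l : ℕ → ℝ) (f : ℝ → ℝ) (K : Set ℝ) : ℝ≥0∞ :=
  ⨆ (m : ℕ) (x : Fin (m + 1) → ℝ) (_ : Monotone x) (_ : ∀ j, x j ∈ K)
    (β : Equiv.Perm (Fin m)),
    ∑ j : Fin m, ENNReal.ofReal (|f (x j.succ) - f (x j.castSucc)| / l (β j))

/-- The Λ-variation of `f : [0,1] → ℝ`. -/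
noncomputable def lamVar (l : ℕ → ℝ) (f : ℝ → ℝ) : ℝ≥0∞ :=
  lamVarOn l f (Set.Icc 0 1)

/-- The norm `‖f‖_Λ = V_Λ(f) + |f 0|` (valued in `[0,∞]`). -/
noncomputable def lamNorm (l : ℕ → ℝ) (f : ℝ → ℝ) : ℝ≥0∞ :=
  lamVar l f + ENNReal.ofReal |f 0|

/-- `f` is continuous in Λ-variation: `V_{Λ_(m)}(f) → 0` as `m → ∞`. -/
def ContInLamVar (l : ℕ → ℝ) (f : ℝ → ℝ) : Prop :=
  Tendsto (fun m => lamVar (fun n => l (n + m)) f) atTop (𝓝 0)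

/-- The restricted Λ-variation `V_{Λ,δ}(f)`: the supremum of `∑ⱼ |f(bⱼ) - f(aⱼ)| / λⱼ`
over all finite sequences of nonoverlapping closed subintervals `[aⱼ, bⱼ]` of `[0,1]`
of length at most `δ`, listed in any order. -/
noncomputable def lamVarDelta (l : ℕ → ℝ) (δ : ℝ) (f : ℝ → ℝ) : ℝ≥0∞ :=
  ⨆ (k : ℕ) (a : Fin k → ℝ) (b : Fin k → ℝ)
    (_ : ∀ j, 0 ≤ a j ∧ a j ≤ b j ∧ b j ≤ 1 ∧ b j - a j ≤ δ)
    (_ : ∀ i j, i ≠ j → b i ≤ a j ∨ b j ≤ a i),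
    ∑ j : Fin k, ENNReal.ofReal (|f (b j) - f (a j)| / l j)

/-- The `n`-th Bernstein polynomial of `f : [0,1] → ℝ`. -/
noncomputable def bern (n : ℕ) (f : ℝ → ℝ) (x : ℝ) : ℝ :=
  ∑ k ∈ Finset.range (n + 1),
    f ((k : ℝ) / n) * (n.choose k : ℝ) * x ^ k * (1 - x) ^ (n - k)

/-- The `n`-th Kantorovich polynomial of `f : [0,1] → ℝ`. -/
noncomputable def kant (n : ℕ) (f : ℝ → ℝ) (x : ℝ) : ℝ :=
  ∑ k ∈ Finset.range (n + 1),
    (n.choose k : ℝ) * x ^ k * (1 - x) ^ (n - k) *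
      ((n + 1) * ∫ t in ((k : ℝ) / (n + 1))..(((k : ℝ) + 1) / (n + 1)), f t)

open scoped NNReal

section LamVarOn

variable {l l' : ℕ → ℝ} {f g : ℝ → ℝ} {K : Set ℝ}

theorem sum_le_lamVarOn {m : ℕ} {x : Fin (m + 1) → ℝ} (hx : Monotone x) (hxK : ∀ j, x j ∈ K)
    (β : Equiv.Perm (Fin m)) :
    ∑ j, ENNReal.ofReal (|f (x j.succ) - f (x j.castSucc)| / l (β j)) ≤ lamVarOn l f K :=
  le_iSup_of_le m <| le_iSup_of_le x <| le_iSup_of_le hx <| le_iSup_of_le hxK <|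
    le_iSup_of_le β le_rfl

theorem lamVarOn_le {C : ℝ≥0∞}
    (h : ∀ (m : ℕ) (x : Fin (m + 1) → ℝ), Monotone x → (∀ j, x j ∈ K) →
      ∀ β : Equiv.Perm (Fin m),
        ∑ j, ENNReal.ofReal (|f (x j.succ) - f (x j.castSucc)| / l (β j)) ≤ C) :
    lamVarOn l f K ≤ C :=
  iSup_le fun m => iSup_le fun x => iSup_le fun hx => iSup_le fun hxK => iSup_le (h m x hx hxK)

theorem ofReal_abs_sub_div_le_lamVarOn {u v : ℝ} (hu : u ∈ K) (hv : v ∈ K) (huv : u ≤ v) :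
    ENNReal.ofReal (|f v - f u| / l 0) ≤ lamVarOn l f K := by
  have hx : Monotone ![u, v] := by
    intro a b hab
    fin_cases a <;> fin_cases b <;> simp_all
  simpa using sum_le_lamVarOn (f := f) (l := l) hx (by simp [Fin.forall_fin_two, hu, hv])
    (Equiv.refl (Fin 1))

theorem lamVarOn_sub_le (hl : ∀ i, 0 ≤ l i) :
    lamVarOn l (f - g) K ≤ lamVarOn l f K + lamVarOn l g K := by
  refine lamVarOn_le fun m x hx hxK β => ?_
  calc ∑ j, ENNReal.ofReal (|(f - g) (x j.succ) - (f - g) (x j.castSucc)| / l (β j))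
      ≤ ∑ j, (ENNReal.ofReal (|f (x j.succ) - f (x j.castSucc)| / l (β j)) +
          ENNReal.ofReal (|g (x j.succ) - g (x j.castSucc)| / l (β j))) := by
        gcongr with j
        refine (ENNReal.ofReal_le_ofReal ?_).trans ENNReal.ofReal_add_le
        rw [← add_div]
        refine div_le_div_of_nonneg_right ?_ (hl _)
        simpa only [Pi.sub_apply, sub_sub_sub_comm] using abs_sub _ _
    _ ≤ lamVarOn l f K + lamVarOn l g K := by
        rw [Finset.sum_add_distrib]
        exact add_le_add (sum_le_lamVarOn hx hxK β) (sum_le_lamVarOn hx hxK β)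

theorem lamVarOn_anti (hl : ∀ i, 0 < l i) (hll' : ∀ i, l i ≤ l' i) :
    lamVarOn l' f K ≤ lamVarOn l f K :=
  lamVarOn_le fun _ _ hx hxK β => (sum_le_lamVarOn hx hxK β).trans' <| by
    gcongr with j
    · exact hl _
    · exact hll' _

theorem LipschitzOnWith.lamVarOn_Icc_le {L : ℝ≥0} {a b : ℝ} (hf : LipschitzOnWith L f (Icc a b))
    (hl : Monotone l) (hl0 : 0 < l 0) :
    lamVarOn l f (Icc a b) ≤ ENNReal.ofReal (L * (b - a) / l 0) := by
  refine lamVarOn_le fun m x hx hxK β => ?_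
  have hgap : ∀ j : Fin m, 0 ≤ x j.succ - x j.castSucc :=
    fun j => sub_nonneg.2 (hx (Fin.castSucc_le_succ j))
  have htele : ∑ j : Fin m, (x j.succ - x j.castSucc) ≤ b - a := by
    cases m with
    | zero => simpa using (hxK 0).1.trans (hxK 0).2
    | succ k =>
      rw [← Finset.Iic_top, Fin.top_eq_last, Fin.sum_Iic_sub]
      linarith [(hxK 0).1, (hxK (Fin.last k).succ).2]
  calc ∑ j, ENNReal.ofReal (|f (x j.succ) - f (x j.castSucc)| / l (β j))
      ≤ ∑ j : Fin m, ENNReal.ofReal (L * (x j.succ - x j.castSucc) / l 0) := by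
        gcongr with j
        · exact mul_nonneg L.2 (hgap j)
        · simpa [Real.dist_eq, abs_of_nonneg (hgap j)] using
            hf.dist_le_mul _ (hxK j.succ) _ (hxK j.castSucc)
        · exact hl (Nat.zero_le _)
    _ = ENNReal.ofReal (L * (∑ j : Fin m, (x j.succ - x j.castSucc)) / l 0) := by
        rw [← ENNReal.ofReal_sum_of_nonneg fun j _ => by have := hgap j; positivity,
          Finset.mul_sum, Finset.sum_div]
    _ ≤ ENNReal.ofReal (L * (b - a) / l 0) := by gcongr

theorem exists_perm_add_eq_of_le {M : ℕ} (β : Equiv.Perm (Fin M)) (m : ℕ) :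
    ∃ σ : Equiv.Perm (Fin M), ∀ j, m ≤ (β j : ℕ) → (σ j : ℕ) + m = β j := by
  obtain ⟨σ, hσ⟩ := Equiv.Perm.exists_extending_pair (α := {j // m ≤ (β j : ℕ)})
    Subtype.val (fun j => ⟨β j - m, by omega⟩) Subtype.val_injective fun a b hab => by
      have := congrArg Fin.val hab
      exact Subtype.ext (β.injective (Fin.ext (by simp only at this; omega)))
  exact ⟨σ, fun j hj => by have := congrArg Fin.val (hσ ⟨j, hj⟩); simp only at this; omega⟩

open Finset in
theorem lamVarOn_le_add_lamVarOn_shift (hl : Monotone l) (hl0 : 0 < l 0) {S : ℝ}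
    (hS : ∀ u ∈ K, |f u| ≤ S) (m : ℕ) :
    lamVarOn l f K ≤ m * ENNReal.ofReal (2 * S / l 0) + lamVarOn (fun i => l (i + m)) f K := by
  refine lamVarOn_le fun M x hx hxK β => ?_
  obtain ⟨σ, hσ⟩ := exists_perm_add_eq_of_le β m
  rw [← sum_filter_add_sum_filter_not univ (fun j => (β j : ℕ) < m)]
  refine add_le_add ?_ ?_
  · have hcard : #{j | (β j : ℕ) < m} ≤ m := by
      simpa using card_le_card_of_injOn (t := range m) (fun j => (β j : ℕ))
        (fun j hj => by simpa using hj) fun a _ b _ hab => β.injective (Fin.ext hab)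
    calc ∑ j ∈ {j | (β j : ℕ) < m}, ENNReal.ofReal (|f (x j.succ) - f (x j.castSucc)| / l (β j))
        ≤ ∑ j ∈ {j | (β j : ℕ) < m}, ENNReal.ofReal (2 * S / l 0) := by
          gcongr with j
          · linarith [(abs_nonneg _).trans (hS _ (hxK 0))]
          · linarith [abs_sub (f (x j.succ)) (f (x j.castSucc)), hS _ (hxK j.succ),
              hS _ (hxK j.castSucc)]
          · exact hl (Nat.zero_le _)
      _ ≤ m * ENNReal.ofReal (2 * S / l 0) := by
          rw [sum_const, nsmul_eq_mul]
          gcongr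
  · calc ∑ j ∈ {j | ¬(β j : ℕ) < m}, ENNReal.ofReal (|f (x j.succ) - f (x j.castSucc)| / l (β j))
        = ∑ j ∈ {j | ¬(β j : ℕ) < m},
            ENNReal.ofReal (|f (x j.succ) - f (x j.castSucc)| / l (σ j + m)) :=
          sum_congr rfl fun j hj => by
            rw [hσ j (not_lt.1 (mem_filter.1 hj).2)]
      _ ≤ ∑ j, ENNReal.ofReal (|f (x j.succ) - f (x j.castSucc)| / l (σ j + m)) :=
          sum_le_sum_of_subset (filter_subset _ _)
      _ ≤ lamVarOn (fun i => l (i + m)) f K := sum_le_lamVarOn hx hxK σ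

theorem sum_le_lamVarOn_of_le_weighted_sum (hl : ∀ i, 0 ≤ l i) {ι : Type*} {s : Finset ι}
    {w : ι → ℝ} (hw : ∀ ω ∈ s, 0 ≤ w ω) (hw1 : ∑ ω ∈ s, w ω = 1) {m : ℕ}
    {y : ι → Fin (m + 1) → ℝ} (hy : ∀ ω ∈ s, Monotone (y ω)) (hyK : ∀ ω ∈ s, ∀ j, y ω j ∈ K)
    {x : Fin (m + 1) → ℝ}
    (hgf : ∀ j : Fin m, |g (x j.succ) - g (x j.castSucc)| ≤
      ∑ ω ∈ s, w ω * |f (y ω j.succ) - f (y ω j.castSucc)|) (β : Equiv.Perm (Fin m)) :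
    ∑ j, ENNReal.ofReal (|g (x j.succ) - g (x j.castSucc)| / l (β j)) ≤ lamVarOn l f K := by
  calc ∑ j, ENNReal.ofReal (|g (x j.succ) - g (x j.castSucc)| / l (β j))
      ≤ ∑ j, ∑ ω ∈ s, ENNReal.ofReal (w ω) *
          ENNReal.ofReal (|f (y ω j.succ) - f (y ω j.castSucc)| / l (β j)) := by
        gcongr with j
        have hterm : ∀ ω ∈ s, 0 ≤ w ω * (|f (y ω j.succ) - f (y ω j.castSucc)| / l (β j)) :=
          fun ω hω => mul_nonneg (hw ω hω) (div_nonneg (abs_nonneg _) (hl _))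
        calc ENNReal.ofReal (|g (x j.succ) - g (x j.castSucc)| / l (β j))
            ≤ ENNReal.ofReal
                (∑ ω ∈ s, w ω * (|f (y ω j.succ) - f (y ω j.castSucc)| / l (β j))) := by
              simp only [← mul_div_assoc, ← Finset.sum_div]
              gcongr
              exacts [hl _, hgf j]
          _ = _ := by
              rw [ENNReal.ofReal_sum_of_nonneg hterm]
              exact Finset.sum_congr rfl fun ω hω => ENNReal.ofReal_mul (hw ω hω)
    _ = ∑ ω ∈ s, ENNReal.ofReal (w ω) *
          ∑ j, ENNReal.ofReal (|f (y ω j.succ) - f (y ω j.castSucc)| / l (β j)) := by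
        rw [Finset.sum_comm]
        simp only [Finset.mul_sum]
    _ ≤ ∑ ω ∈ s, ENNReal.ofReal (w ω) * lamVarOn l f K := by
        gcongr with ω hω
        exact sum_le_lamVarOn (hy ω hω) (hyK ω hω) β
    _ = lamVarOn l f K := by
        rw [← Finset.sum_mul, ← ENNReal.ofReal_sum_of_nonneg hw, hw1, ENNReal.ofReal_one, one_mul]

end LamVarOn

open Finset in
theorem Fintype.filter_piFinset_filter_mem_eq {ι A : Type*} [Fintype ι] [DecidableEq ι]
    [DecidableEq A] {U T : Finset A} (hTU : T ⊆ U) (S : Finset ι) :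
    {ω ∈ Fintype.piFinset (fun _ : ι => U) | ({i | ω i ∈ T} : Finset ι) = S} =
      Fintype.piFinset (fun i => if i ∈ S then T else U \ T) := by
  ext ω
  simp only [mem_filter, Fintype.mem_piFinset, Finset.ext_iff, Finset.mem_univ, true_and]
  constructor
  · rintro ⟨hU, hS⟩ i
    split_ifs with hi
    · exact (hS i).2 hi
    · exact mem_sdiff.2 ⟨hU i, fun h => hi ((hS i).1 h)⟩
  · intro h
    refine ⟨fun i => ?_, fun i => ?_⟩ <;> specialize h i <;> split_ifs at h with hi
    exacts [hTU h, (mem_sdiff.1 h).1, iff_of_true h hi, iff_of_false (mem_sdiff.1 h).2 hi]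

open Finset in
theorem Finset.sum_piFinset_prod_mul_card_filter {A R : Type*} [CommSemiring R] [DecidableEq A]
    {U T : Finset A} (hTU : T ⊆ U) (d : A → R) (φ : ℕ → R) (n : ℕ) :
    ∑ ω ∈ Fintype.piFinset (fun _ : Fin n => U), (∏ i, d (ω i)) * φ #{i | ω i ∈ T} =
      ∑ k ∈ range (n + 1),
        n.choose k * (∑ a ∈ T, d a) ^ k * (∑ a ∈ U \ T, d a) ^ (n - k) * φ k := by
  calc ∑ ω ∈ Fintype.piFinset (fun _ : Fin n => U), (∏ i, d (ω i)) * φ #{i | ω i ∈ T}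
      = ∑ S : Finset (Fin n), ∑ ω ∈ Fintype.piFinset (fun i => if i ∈ S then T else U \ T),
          (∏ i, d (ω i)) * φ #S := by
        rw [← sum_fiberwise_of_maps_to (g := fun ω => ({i | ω i ∈ T} : Finset (Fin n)))
          (t := univ) fun _ _ => mem_univ _]
        refine sum_congr rfl fun S _ => ?_
        rw [← Fintype.filter_piFinset_filter_mem_eq hTU S]
        exact sum_congr rfl fun ω hω => by rw [(mem_filter.1 hω).2]
    _ = ∑ S : Finset (Fin n),
          (∑ a ∈ T, d a) ^ #S * (∑ a ∈ U \ T, d a) ^ (n - #S) * φ #S := by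
        refine sum_congr rfl fun S _ => ?_
        rw [← sum_mul, ← prod_univ_sum]
        simp only [apply_ite (fun t => ∑ a ∈ t, d a)]
        rw [prod_ite, prod_const, prod_const, filter_mem_eq_inter, univ_inter, filter_not,
          filter_mem_eq_inter, univ_inter, card_sdiff, inter_univ, card_univ, Fintype.card_fin]
    _ = _ := by
        rw [← powerset_univ, sum_powerset_apply_card
          (fun k => (∑ a ∈ T, d a) ^ k * (∑ a ∈ U \ T, d a) ^ (n - k) * φ k), card_univ,
          Fintype.card_fin]
        simp only [nsmul_eq_mul, mul_assoc]

open Finset in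
theorem bern_eq_sum_piFinset (n : ℕ) (f : ℝ → ℝ) {z : ℕ → ℝ} {N k : ℕ} (hz0 : z 0 = 0)
    (hzN : z N = 1) (hk : k ≤ N) :
    bern n f (z k) = ∑ ω ∈ Fintype.piFinset (fun _ : Fin n => range N),
      (∏ i, (z (ω i + 1) - z (ω i))) * f (#{i | ω i < k} / n) := by
  have hT : ∑ t ∈ range k, (z (t + 1) - z t) = z k := by rw [sum_range_sub, hz0, sub_zero]
  have hUT : ∑ t ∈ range N \ range k, (z (t + 1) - z t) = 1 - z k := by
    rw [sum_sdiff_eq_sub (range_subset_range.2 hk), sum_range_sub, sum_range_sub, hzN, hz0]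
    ring
  have := sum_piFinset_prod_mul_card_filter (range_subset_range.2 hk)
    (fun t => z (t + 1) - z t) (fun j => f (j / n)) n
  simp only [Finset.mem_range, hT, hUT] at this
  rw [this, bern]
  exact sum_congr rfl fun j _ => by ring

theorem exists_monotone_nat_extension {m : ℕ} {x : Fin (m + 1) → ℝ} (hx : Monotone x)
    (hx01 : ∀ j, x j ∈ Icc 0 1) :
    ∃ z : ℕ → ℝ, Monotone z ∧ z 0 = 0 ∧ z (m + 2) = 1 ∧ ∀ j : Fin (m + 1), z (j + 1) = x j := by
  refine ⟨fun | 0 => 0 | k + 1 => if h : k < m + 1 then x ⟨k, h⟩ else 1,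
    monotone_nat_of_le_succ fun k => ?_, rfl, by simp, fun j => dif_pos j.isLt⟩
  rcases k with _ | k
  · dsimp only
    split_ifs
    exacts [(hx01 _).1, zero_le_one]
  · dsimp only
    split_ifs with h₁ h₂ h₂
    exacts [hx (Fin.mk_le_mk.2 k.le_succ), (hx01 _).2, absurd (by omega) h₁, le_rfl]

open Finset in
theorem lamVar_bern_le {l : ℕ → ℝ} (hl : ∀ i, 0 ≤ l i) (n : ℕ) (f : ℝ → ℝ) :
    lamVar l (bern n f) ≤ lamVar l f := by
  refine lamVarOn_le fun m x hx hx01 β => ?_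
  obtain ⟨z, hz, hz0, hz1, hzx⟩ := exists_monotone_nat_extension hx hx01
  -- `ω i` is the cell `[z (ω i), z (ω i + 1)]` of the `i`-th of `n` independent uniform points,
  -- `w ω` is the probability of `ω`, and `n * y ω j` counts the points below `x j`.
  set Ω := Fintype.piFinset fun _ : Fin n => range (m + 2)
  set w : (Fin n → ℕ) → ℝ := fun ω => ∏ i, (z (ω i + 1) - z (ω i))
  set y : (Fin n → ℕ) → Fin (m + 1) → ℝ := fun ω j => (#{i | ω i < j + 1} : ℝ) / n
  have hbern : ∀ j, bern n f (x j) = ∑ ω ∈ Ω, w ω * f (y ω j) := fun j => by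
    rw [← hzx, bern_eq_sum_piFinset n f hz0 hz1 (by omega)]
  have hw : ∀ ω ∈ Ω, 0 ≤ w ω :=
    fun ω _ => prod_nonneg fun i _ => sub_nonneg.2 (hz (Nat.le_succ _))
  have hw1 : ∑ ω ∈ Ω, w ω = 1 := by
    refine (sum_prod_piFinset (range (m + 2)) fun _ t => z (t + 1) - z t).trans ?_
    rw [sum_range_sub, hz1, hz0, sub_zero, prod_const_one]
  have hy : ∀ ω ∈ Ω, Monotone (y ω) := fun ω _ j j' hjj' => by
    simp only [y]
    gcongr
    exact hjj'
  have hy01 : ∀ ω ∈ Ω, ∀ j, y ω j ∈ Set.Icc 0 1 := fun ω _ j =>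
    ⟨by positivity, div_le_one_of_le₀ (by exact_mod_cast (card_filter_le _ _).trans (by simp))
      n.cast_nonneg⟩
  refine sum_le_lamVarOn_of_le_weighted_sum hl hw hw1 hy hy01 (fun j => ?_) β
  rw [hbern, hbern, ← sum_sub_distrib]
  refine (abs_sum_le_sum_abs _ _).trans_eq (sum_congr rfl fun ω hω => ?_)
  rw [← mul_sub, abs_mul, abs_of_nonneg (hw ω hω)]

theorem bern_apply_zero (n : ℕ) (f : ℝ → ℝ) : bern n f 0 = f 0 := by
  rw [bern, Finset.sum_eq_single 0 (fun k _ hk => by simp [zero_pow hk]) (by simp)]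
  simp

theorem contDiff_bern (n : ℕ) (f : ℝ → ℝ) : ContDiff ℝ 1 (bern n f) := by
  unfold bern
  fun_prop

theorem exists_lipschitzOnWith_bern (n : ℕ) (f : ℝ → ℝ) :
    ∃ L, LipschitzOnWith L (bern n f) (Icc 0 1) :=
  (contDiff_bern n f).contDiffOn.exists_lipschitzOnWith one_ne_zero (convex_Icc 0 1)
    isCompact_Icc

open scoped unitInterval in
theorem bernsteinApproximation_apply_eq_bern {f : ℝ → ℝ} {F : C(I, ℝ)} (hF : ∀ x, F x = f x)
    (n : ℕ) (x : I) : bernsteinApproximation n F x = bern n f x := by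
  rw [bernsteinApproximation.apply, bern, ← Fin.sum_univ_eq_sum_range]
  refine Finset.sum_congr rfl fun k _ => ?_
  rw [hF, bernstein_apply, smul_eq_mul]
  simp only [bernstein.z]
  ring

theorem tendsto_zero_of_forall_le_add {α β : Type*} {la : Filter α} {lb : Filter β} [lb.NeBot]
    {a : α → ℝ≥0∞} {c : β → α → ℝ≥0∞} {v : β → ℝ≥0∞} (hc : ∀ b, Tendsto (c b) la (𝓝 0))
    (hv : Tendsto v lb (𝓝 0)) (h : ∀ b x, a x ≤ c b x + v b) : Tendsto a la (𝓝 0) := by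
  refine ENNReal.tendsto_nhds_zero.2 fun ε hε => ?_
  obtain ⟨b, hb⟩ := (ENNReal.tendsto_nhds_zero.1 hv (ε / 2) (ENNReal.half_pos hε.ne')).exists
  filter_upwards [ENNReal.tendsto_nhds_zero.1 (hc b) (ε / 2) (ENNReal.half_pos hε.ne')] with x hx
  calc a x ≤ c b x + v b := h b x
    _ ≤ ε / 2 + ε / 2 := add_le_add hx hb
    _ = ε := ENNReal.add_halves ε

theorem lamNorm_eq_lamVar {l : ℕ → ℝ} {g : ℝ → ℝ} (hg : g 0 = 0) : lamNorm l g = lamVar l g := by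
  simp [lamNorm, hg]

theorem tendstoUniformlyOn_of_tendsto_lamVar_sub {ι : Type*} {p : Filter ι} {l : ℕ → ℝ}
    (hl0 : 0 < l 0) {F : ι → ℝ → ℝ} {f : ℝ → ℝ} (hF0 : ∀ i, F i 0 = f 0)
    (h : Tendsto (fun i => lamVar l (F i - f)) p (𝓝 0)) : TendstoUniformlyOn F f p (Icc 0 1) := by
  refine Metric.tendstoUniformlyOn_iff.2 fun ε hε => ?_
  filter_upwards [(tendsto_order.1 h).2 _ (ENNReal.ofReal_pos.2 (div_pos hε hl0))] with i hi x hx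
  have := (ofReal_abs_sub_div_le_lamVarOn (f := F i - f) (l := l) (left_mem_Icc.2 zero_le_one)
    hx hx.1).trans_lt hi
  rw [ENNReal.ofReal_lt_ofReal_iff (div_pos hε hl0), div_lt_div_iff_of_pos_right hl0] at this
  simpa [Real.dist_eq, abs_sub_comm, hF0] using this

theorem continuousOn_of_tendsto_lamVar_bern_sub {l : ℕ → ℝ} (hl0 : 0 < l 0) {f : ℝ → ℝ}
    (h : Tendsto (fun n => lamVar l (bern n f - f)) atTop (𝓝 0)) : ContinuousOn f (Icc 0 1) :=
  (tendstoUniformlyOn_of_tendsto_lamVar_sub hl0 (fun n => bern_apply_zero n f) h).continuousOn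
    (Frequently.of_forall fun n => (contDiff_bern n f).continuous.continuousOn)

theorem lamVar_lt_top_of_tendsto_lamVar_bern_sub {l : ℕ → ℝ} (hl : Monotone l) (hl0 : 0 < l 0)
    {f : ℝ → ℝ} (h : Tendsto (fun n => lamVar l (bern n f - f)) atTop (𝓝 0)) :
    lamVar l f < ⊤ := by
  obtain ⟨n, hn⟩ := ((tendsto_order.1 h).2 ⊤ ENNReal.zero_lt_top).exists
  obtain ⟨L, hL⟩ := exists_lipschitzOnWith_bern n f
  calc lamVar l f = lamVar l (bern n f - (bern n f - f)) := by rw [sub_sub_cancel]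
    _ ≤ lamVar l (bern n f) + lamVar l (bern n f - f) :=
        lamVarOn_sub_le fun i => hl0.le.trans (hl (Nat.zero_le i))
    _ < ⊤ := ENNReal.add_lt_top.2 ⟨(hL.lamVarOn_Icc_le hl hl0).trans_lt ENNReal.ofReal_lt_top, hn⟩

theorem contInLamVar_of_tendsto_lamVar_bern_sub {l : ℕ → ℝ} (hl : Monotone l) (hl0 : 0 < l 0)
    (hl_top : Tendsto l atTop atTop) {f : ℝ → ℝ}
    (h : Tendsto (fun n => lamVar l (bern n f - f)) atTop (𝓝 0)) : ContInLamVar l f := by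
  have hpos : ∀ i, 0 < l i := fun i => hl0.trans_le (hl (Nat.zero_le i))
  choose L hL using fun n => exists_lipschitzOnWith_bern n f
  refine tendsto_zero_of_forall_le_add (c := fun n m => ENNReal.ofReal (L n / l m))
    (fun n => ?_) h fun n m => ?_
  · simpa using ENNReal.tendsto_ofReal (tendsto_const_nhds.div_atTop hl_top)
  have hbern : lamVar (fun i => l (i + m)) (bern n f) ≤ ENNReal.ofReal (L n / l m) := by
    simpa [lamVar] using (hL n).lamVarOn_Icc_le (l := fun i => l (i + m))
      (fun i j hij => hl (by omega)) (hpos (0 + m))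
  calc lamVar (fun i => l (i + m)) f
      = lamVar (fun i => l (i + m)) (bern n f - (bern n f - f)) := by rw [sub_sub_cancel]
    _ ≤ lamVar (fun i => l (i + m)) (bern n f) + lamVar (fun i => l (i + m)) (bern n f - f) :=
        lamVarOn_sub_le fun i => (hpos _).le
    _ ≤ ENNReal.ofReal (L n / l m) + lamVar l (bern n f - f) :=
        add_le_add hbern (lamVarOn_anti hpos fun i => hl (Nat.le_add_right i m))

theorem tendsto_lamVar_bern_sub {l : ℕ → ℝ} (hl : Monotone l) (hl0 : 0 < l 0) {f : ℝ → ℝ}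
    (hf : ContinuousOn f (Icc 0 1)) (hfΛ : ContInLamVar l f) :
    Tendsto (fun n => lamVar l (bern n f - f)) atTop (𝓝 0) := by
  have hpos : ∀ i, 0 ≤ l i := fun i => hl0.le.trans (hl (Nat.zero_le i))
  set F : C(unitInterval, ℝ) := ⟨(Icc 0 1).domRestrict f, hf.domRestrict⟩
  set S : ℕ → ℝ := fun n => ‖bernsteinApproximation n F - F‖
  have hS : Tendsto S atTop (𝓝 0) :=
    tendsto_iff_norm_sub_tendsto_zero.1 (bernsteinApproximation_uniform F)
  have hbound : ∀ n, ∀ u ∈ Icc (0 : ℝ) 1, |(bern n f - f) u| ≤ S n := fun n u hu => by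
    simpa [F, bernsteinApproximation_apply_eq_bern (F := F) (f := f) fun _ => rfl] using
      (bernsteinApproximation n F - F).norm_coe_le_norm ⟨u, hu⟩
  refine tendsto_zero_of_forall_le_add (c := fun (m n : ℕ) => m * ENNReal.ofReal (2 * S n / l 0))
    (v := fun m => lamVar (fun i => l (i + m)) f + lamVar (fun i => l (i + m)) f)
    (fun m => ?_) (by simpa using hfΛ.add hfΛ) fun m n => ?_
  · simpa using ENNReal.Tendsto.const_mul
      (ENNReal.tendsto_ofReal ((hS.const_mul 2).div_const (l 0)))
      (Or.inr (ENNReal.natCast_ne_top m))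
  calc lamVar l (bern n f - f)
      ≤ m * ENNReal.ofReal (2 * S n / l 0) + lamVar (fun i => l (i + m)) (bern n f - f) :=
        lamVarOn_le_add_lamVarOn_shift hl hl0 (hbound n) m
    _ ≤ m * ENNReal.ofReal (2 * S n / l 0) +
          (lamVar (fun i => l (i + m)) (bern n f) + lamVar (fun i => l (i + m)) f) := by
        gcongr
        exact lamVarOn_sub_le fun i => hpos _
    _ ≤ _ := by
        gcongr
        exact lamVar_bern_le (fun i => hpos _) n f

/-- If `Λ` is a proper Λ-sequence and `f : [0,1] → ℝ`, then
`‖B_n f - f‖_Λ → 0` if and only if `f` is continuous, of bounded Λ-variation, and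
continuous in Λ-variation. -/
theorem bernstein_lamNorm_convergence_iff (l : ℕ → ℝ) (hl : IsProperLambdaSeq l)
    (f : ℝ → ℝ) :
    Tendsto (fun n => lamNorm l (fun x => bern n f x - f x)) atTop (𝓝 0) ↔
      (ContinuousOn f (Set.Icc 0 1) ∧ lamVar l f < ⊤ ∧ ContInLamVar l f) := by
  obtain ⟨⟨hmono, hpos, -⟩, htop⟩ := hl
  have hnorm : ∀ n, lamNorm l (fun x => bern n f x - f x) = lamVar l (bern n f - f) :=
    fun n => lamNorm_eq_lamVar (sub_eq_zero.2 (bern_apply_zero n f))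
  simp only [hnorm]
  exact ⟨fun h => ⟨continuousOn_of_tendsto_lamVar_bern_sub (hpos 0) h,
      lamVar_lt_top_of_tendsto_lamVar_bern_sub hmono (hpos 0) h,
      contInLamVar_of_tendsto_lamVar_bern_sub hmono (hpos 0) htop h⟩,
    fun ⟨hf, _, hfΛ⟩ => tendsto_lamVar_bern_sub hmono (hpos 0) hf hfΛ⟩
end

section
/- For every proper Λ-sequence Λ, the space CΛBV_c is separable in the ‖·‖_Λ norm: there exists a countable set D ⊆ CΛBV_c such that for every f ∈ CΛBV_c and every ε > 0 there is g ∈ D with ‖f − g‖_Λ < ε. -/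
/-!
The countable dense family consists of the piecewise-linear interpolants on the grids `i / N`
with rational node values; they are Lipschitz, and a Lipschitz function `g` has
`V_{Λ_(M)}(g) ≤ Lip(g) / λ_{M+1} → 0` because `Λ` is proper.

Given `f ∈ CΛBV_c`, take `M` with `V_{Λ_(M)}(f)` small and let `g` interpolate `f` on a grid.
In a partition sum for `V_Λ(f - g)` at most `M` gaps carry one of the weights `λ₁, …, λ_M`; they
contribute at most `2 M ‖f - g‖_∞ / λ₁`, which is small once the grid is fine, by uniform
continuity. The other gaps are bounded by `V_{Λ_(M)}(f) + V_{Λ_(M)}(g)`, and the key estimate is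
`V_Λ(g) ≤ 4 V_Λ(f)`: inside one cell `g` is affine, so the gaps in a cell add up to at most one
increment of `f` over that cell; a gap crossing cells splits at the nodes into three increments
of `f`, and each of the three resulting families consists of non-overlapping intervals with
distinct weights. Rounding the node values to rationals changes `g` by a Lipschitz function of
small constant.
-/

open Filter Set MeasureTheory
open scoped ENNReal Topology

open Function

section LowerBound

variable {l : ℕ → ℝ} {h : ℝ → ℝ}

theorem sum_le_lamVar_of_monotone {m : ℕ} {x : Fin (m + 1) → ℝ} (hx : Monotone x)
    (hx01 : ∀ j, x j ∈ Icc 0 1) (β : Equiv.Perm (Fin m)) :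
    ∑ j : Fin m, ENNReal.ofReal (|h (x j.succ) - h (x j.castSucc)| / l (β j)) ≤ lamVar l h :=
  le_iSup_of_le m <| le_iSup_of_le x <| le_iSup_of_le hx <| le_iSup_of_le hx01 <|
    le_iSup_of_le β le_rfl

theorem lamVar_le {c : ℝ≥0∞}
    (H : ∀ (m : ℕ) (x : Fin (m + 1) → ℝ), Monotone x → (∀ j, x j ∈ Icc 0 1) →
      ∀ β : Equiv.Perm (Fin m),
        ∑ j : Fin m, ENNReal.ofReal (|h (x j.succ) - h (x j.castSucc)| / l (β j)) ≤ c) :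
    lamVar l h ≤ c :=
  iSup_le fun m => iSup_le fun x => iSup₂_le fun hx hx01 => iSup_le (H m x hx hx01)

theorem exists_perm_comp_eq {ι α : Type*} [Finite α] {u v : ι → α} (hu : Injective u)
    (hv : Injective v) : ∃ σ : Equiv.Perm α, σ ∘ v = u := by
  classical
  let e := (Equiv.ofInjective v hv).symm.trans (Equiv.ofInjective u hu)
  refine ⟨e.extendSubtype, funext fun t => ?_⟩
  simp [e, Equiv.extendSubtype_apply_of_mem e (v t) ⟨t, rfl⟩]

theorem exists_monotone_interleave {k : ℕ} {a b : Fin k → ℝ} (ha : ∀ t, 0 ≤ a t)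
    (hab : ∀ t, a t ≤ b t) (hb : ∀ t, b t ≤ 1) (hchain : ∀ s t, s < t → b s ≤ a t) :
    ∃ y : ℕ → ℝ, Monotone y ∧ (∀ n, y n ∈ Icc (0 : ℝ) 1) ∧
      ∀ t : Fin k, y (2 * t) = a t ∧ y (2 * t + 1) = b t := by
  let y : ℕ → ℝ := fun n =>
    if hn : n < 2 * k then (if n % 2 = 0 then a else b) ⟨n / 2, by omega⟩ else 1
  have hy_even (t : Fin k) : y (2 * t) = a t := by
    simp only [y, dif_pos (show 2 * (t : ℕ) < 2 * k by omega), Nat.mul_mod_right, if_pos]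
    congr 2; omega
  have hy_odd (t : Fin k) : y (2 * t + 1) = b t := by
    simp only [y, dif_pos (show 2 * (t : ℕ) + 1 < 2 * k by omega)]
    rw [if_neg (by omega)]
    congr 2; omega
  have hy_mem (n : ℕ) (hn : n < 2 * k) :
      a ⟨n / 2, by omega⟩ ≤ y n ∧ y n ≤ b ⟨n / 2, by omega⟩ := by
    simp only [y, dif_pos hn]
    split_ifs
    exacts [⟨le_rfl, hab _⟩, ⟨hab _, le_rfl⟩]
  refine ⟨y, fun n n' hnn' => ?_, fun n => ?_, fun t => ⟨hy_even t, hy_odd t⟩⟩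
  · by_cases hn' : n' < 2 * k
    · have hn : n < 2 * k := by omega
      rcases (Nat.div_le_div_right (c := 2) hnn').lt_or_eq with hlt | heq
      · exact (hy_mem n hn).2.trans <| (hchain _ _ (Fin.mk_lt_mk.2 hlt)).trans (hy_mem n' hn').1
      · rcases hnn'.lt_or_eq with hlt | rfl
        · rw [show n = 2 * (n / 2) by omega, show n' = 2 * (n / 2) + 1 by omega,
            hy_even ⟨n / 2, by omega⟩, hy_odd ⟨n / 2, by omega⟩]
          exact hab _
        · exact le_rfl
    · simp only [y, dif_neg hn']
      by_cases hn : n < 2 * k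
      · exact (hy_mem n hn).2.trans (hb _)
      · simp only [dif_neg hn, le_rfl]
  · by_cases hn : n < 2 * k
    · exact ⟨(ha _).trans (hy_mem n hn).1, (hy_mem n hn).2.trans (hb _)⟩
    · simp only [y, dif_neg hn]
      exact ⟨zero_le_one, le_rfl⟩

/-- The intervals are the even-numbered gaps of an interleaved partition, padded by enough empty
gaps that a permutation of the gaps can send the `t`-th interval to the weight `w t`. -/
theorem sum_le_lamVar_of_chain {k : ℕ} {a b : Fin k → ℝ} {w : Fin k → ℕ} (hw : Injective w)
    (ha : ∀ t, 0 ≤ a t) (hab : ∀ t, a t ≤ b t) (hb : ∀ t, b t ≤ 1)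
    (hchain : ∀ s t, s < t → b s ≤ a t) :
    ∑ t, ENNReal.ofReal (|h (b t) - h (a t)| / l (w t)) ≤ lamVar l h := by
  obtain ⟨y, hy_mono, hy01, hy⟩ := exists_monotone_interleave ha hab hb hchain
  set m := 2 * k + (Finset.univ.sup w + 1)
  have hw_lt (t : Fin k) : w t < m := by
    have := Finset.le_sup (f := w) (Finset.mem_univ t)
    omega
  let v : Fin k ↪ Fin m := ⟨fun t => ⟨2 * t, by omega⟩, fun s t hst => by
    simp only [Fin.mk.injEq] at hst; omega⟩
  obtain ⟨σ, hσ⟩ := exists_perm_comp_eq (u := fun t => (⟨w t, hw_lt t⟩ : Fin m))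
    (fun s t hst => hw (Fin.mk.inj_iff.1 hst)) v.injective
  let x : Fin (m + 1) → ℝ := fun j => y j
  let G : Fin m → ℝ≥0∞ := fun j =>
    ENNReal.ofReal (|h (x j.succ) - h (x j.castSucc)| / l (σ j))
  have hG (t : Fin k) : G (v t) = ENNReal.ofReal (|h (b t) - h (a t)| / l (w t)) := by
    have hσt : σ (v t) = ⟨w t, hw_lt t⟩ := congrFun hσ t
    simp only [G, x, hσt, Fin.val_succ, Fin.val_castSucc]
    rw [show ((v t : Fin m) : ℕ) = 2 * t from rfl, (hy t).1, (hy t).2]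
  calc ∑ t, ENNReal.ofReal (|h (b t) - h (a t)| / l (w t))
      = ∑ j ∈ Finset.univ.map v, G j := by simp only [Finset.sum_map, hG]
    _ ≤ ∑ j, G j := Finset.sum_le_sum_of_subset (Finset.subset_univ _)
    _ ≤ lamVar l h := sum_le_lamVar_of_monotone (fun i j hij => hy_mono hij) (fun j => hy01 j) σ

theorem sum_le_lamVar {ι : Type*} [LinearOrder ι] (s : Finset ι) {a b : ι → ℝ} {w : ι → ℕ}
    (hw : InjOn w s) (ha : ∀ i ∈ s, 0 ≤ a i) (hab : ∀ i ∈ s, a i ≤ b i)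
    (hb : ∀ i ∈ s, b i ≤ 1) (hchain : ∀ i ∈ s, ∀ j ∈ s, i < j → b i ≤ a j) :
    ∑ i ∈ s, ENNReal.ofReal (|h (b i) - h (a i)| / l (w i)) ≤ lamVar l h := by
  set e := s.orderEmbOfFin rfl
  have he (t) : e t ∈ s := s.orderEmbOfFin_mem rfl t
  rw [← s.map_orderEmbOfFin_univ rfl, Finset.sum_map]
  exact sum_le_lamVar_of_chain (fun s t hst => e.injective (hw (he s) (he t) hst))
    (fun t => ha _ (he t)) (fun t => hab _ (he t)) (fun t => hb _ (he t))
    (fun s t hst => hchain _ (he s) _ (he t) (e.strictMono hst))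

end LowerBound

section UpperBound

variable {l : ℕ → ℝ}

theorem sum_sub_le_of_pairwiseDisjoint {ι : Type*} {s : Finset ι} {a b : ι → ℝ} {A B : ℝ}
    (hAB : A ≤ B) (hA : ∀ i ∈ s, A ≤ a i) (hab : ∀ i ∈ s, a i ≤ b i) (hB : ∀ i ∈ s, b i ≤ B)
    (hd : (s : Set ι).PairwiseDisjoint fun i => Ioo (a i) (b i)) :
    ∑ i ∈ s, (b i - a i) ≤ B - A := by
  have hvol : ∑ i ∈ s, volume (Ioo (a i) (b i)) ≤ volume (Icc A B) := by
    rw [← measure_biUnion_finset hd fun i _ => measurableSet_Ioo]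
    exact measure_mono <| iUnion₂_subset fun i hi =>
      Ioo_subset_Icc_self.trans (Icc_subset_Icc (hA i hi) (hB i hi))
  simp only [Real.volume_Ioo, Real.volume_Icc] at hvol
  rwa [← ENNReal.ofReal_sum_of_nonneg fun i hi => sub_nonneg.2 (hab i hi),
    ENNReal.ofReal_le_ofReal_iff (sub_nonneg.2 hAB)] at hvol

theorem pairwiseDisjoint_Ioo_of_monotone {m : ℕ} {x : Fin (m + 1) → ℝ} (hx : Monotone x)
    (s : Set (Fin m)) : s.PairwiseDisjoint fun j => Ioo (x j.castSucc) (x j.succ) := by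
  refine ((pairwise_disjoint_on _).2 fun i j hij => ?_).set_pairwise s
  have : x i.succ ≤ x j.castSucc := hx (Fin.le_def.2 (by simp; omega))
  exact Set.disjoint_left.2 fun z hi hj => (hi.2.trans_le this).not_gt hj.1

theorem lamVar_le_of_abs_sub_le (hl : Monotone l) (hl₀ : 0 < l 0) {g : ℝ → ℝ} {K : ℝ}
    (hK : 0 ≤ K) (hg : ∀ y ∈ Icc (0 : ℝ) 1, ∀ z ∈ Icc (0 : ℝ) 1, |g y - g z| ≤ K * |y - z|) :
    lamVar l g ≤ ENNReal.ofReal (K / l 0) := by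
  refine lamVar_le fun m x hx hx01 β => ?_
  have hgap (j : Fin m) : 0 ≤ x j.succ - x j.castSucc :=
    sub_nonneg.2 (hx (Fin.castSucc_le_succ j))
  have hlen : ∑ j : Fin m, (x j.succ - x j.castSucc) ≤ 1 := by
    simpa using sum_sub_le_of_pairwiseDisjoint zero_le_one (fun j _ => (hx01 _).1)
      (fun j _ => sub_nonneg.1 (hgap j)) (fun j _ => (hx01 _).2)
      (pairwiseDisjoint_Ioo_of_monotone hx _)
  calc ∑ j : Fin m, ENNReal.ofReal (|g (x j.succ) - g (x j.castSucc)| / l (β j))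
      ≤ ∑ j : Fin m, ENNReal.ofReal (K * (x j.succ - x j.castSucc) / l 0) := by
        gcongr with j
        · exact mul_nonneg hK (hgap j)
        · calc |g (x j.succ) - g (x j.castSucc)| ≤ K * |x j.succ - x j.castSucc| :=
                hg _ (hx01 _) _ (hx01 _)
            _ = K * (x j.succ - x j.castSucc) := by rw [abs_of_nonneg (hgap j)]
        · exact hl (Nat.zero_le _)
    _ = ENNReal.ofReal (K * (∑ j : Fin m, (x j.succ - x j.castSucc)) / l 0) := by
        rw [← ENNReal.ofReal_sum_of_nonneg fun j _ => by have := hgap j; positivity,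
          Finset.mul_sum, Finset.sum_div]
    _ ≤ ENNReal.ofReal (K / l 0) := by
        gcongr
        exact mul_le_of_le_one_right hK hlen

theorem contInLamVar_of_abs_sub_le (hl : IsProperLambdaSeq l) {g : ℝ → ℝ} {K : ℝ} (hK : 0 ≤ K)
    (hg : ∀ y ∈ Icc (0 : ℝ) 1, ∀ z ∈ Icc (0 : ℝ) 1, |g y - g z| ≤ K * |y - z|) :
    ContInLamVar l g := by
  obtain ⟨⟨hmono, hpos, -⟩, htop⟩ := hl
  have hK_div : Tendsto (fun M => ENNReal.ofReal (K / l (0 + M))) atTop (𝓝 0) := by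
    simpa using ENNReal.tendsto_ofReal (tendsto_const_nhds.div_atTop htop)
  refine tendsto_of_tendsto_of_tendsto_of_le_of_le tendsto_const_nhds hK_div
    (fun _ => zero_le) fun M => ?_
  exact lamVar_le_of_abs_sub_le (fun a b hab => hmono (by omega)) (hpos _) hK hg

theorem lamVar_sub_le (f g : ℝ → ℝ) :
    lamVar l (fun y => f y - g y) ≤ lamVar l f + lamVar l g := by
  refine lamVar_le fun m x hx hx01 β => ?_
  calc ∑ j : Fin m, ENNReal.ofReal
          (|f (x j.succ) - g (x j.succ) - (f (x j.castSucc) - g (x j.castSucc))| / l (β j))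
      ≤ ∑ j : Fin m, (ENNReal.ofReal (|f (x j.succ) - f (x j.castSucc)| / l (β j))
          + ENNReal.ofReal (|g (x j.succ) - g (x j.castSucc)| / l (β j))) := by
        gcongr with j
        refine le_trans ?_ ENNReal.ofReal_add_le
        rcases le_or_gt 0 (l (β j)) with hlj | hlj
        · rw [← add_div]
          gcongr
          calc _ = |(f (x j.succ) - f (x j.castSucc)) - (g (x j.succ) - g (x j.castSucc))| := by
                ring_nf
            _ ≤ _ := abs_sub _ _
        · rw [ENNReal.ofReal_of_nonpos (div_nonpos_of_nonneg_of_nonpos (abs_nonneg _) hlj.le)]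
          exact zero_le
    _ ≤ lamVar l f + lamVar l g := by
        rw [Finset.sum_add_distrib]
        exact add_le_add (sum_le_lamVar_of_monotone hx hx01 β)
          (sum_le_lamVar_of_monotone hx hx01 β)

theorem lamVar_le_of_abs_le (hl : Monotone l) (hl₀ : 0 < l 0) {h : ℝ → ℝ} {H : ℝ}
    (hH : ∀ y ∈ Icc (0 : ℝ) 1, |h y| ≤ H) (M : ℕ) :
    lamVar l h ≤ ENNReal.ofReal (M * (2 * H / l 0)) + lamVar (fun n => l (n + M)) h := by
  have hH₀ : 0 ≤ H := (abs_nonneg _).trans (hH 0 ⟨le_rfl, zero_le_one⟩)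
  refine lamVar_le fun m x hx hx01 β => ?_
  set T : Fin m → ℝ≥0∞ := fun j => ENNReal.ofReal (|h (x j.succ) - h (x j.castSucc)| / l (β j))
  rw [← Finset.sum_filter_add_sum_filter_not _ (fun j => (β j : ℕ) < M)]
  refine add_le_add ?_ ?_
  · have hcard : (Finset.univ.filter fun j => (β j : ℕ) < M).card ≤ M := by
      simpa using Finset.card_le_card_of_injOn (fun j => (β j : ℕ)) (t := Finset.range M)
        (fun j hj => by simpa using hj) fun i _ j _ hij => β.injective (Fin.ext hij)
    have hT (j : Fin m) : T j ≤ ENNReal.ofReal (2 * H / l 0) := by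
      have hdiff : |h (x j.succ) - h (x j.castSucc)| ≤ 2 * H := by
        linarith [abs_sub (h (x j.succ)) (h (x j.castSucc)), hH _ (hx01 j.succ),
          hH _ (hx01 j.castSucc)]
      exact ENNReal.ofReal_le_ofReal (div_le_div₀ (by positivity) hdiff hl₀ (hl (Nat.zero_le _)))
    calc ∑ j ∈ Finset.univ.filter (fun j => (β j : ℕ) < M), T j
        ≤ (Finset.univ.filter fun j => (β j : ℕ) < M).card • ENNReal.ofReal (2 * H / l 0) :=
          Finset.sum_le_card_nsmul _ _ _ fun j _ => hT j
      _ ≤ M • ENNReal.ofReal (2 * H / l 0) := nsmul_le_nsmul_left zero_le hcard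
      _ = ENNReal.ofReal (M * (2 * H / l 0)) := by
          rw [nsmul_eq_mul, ENNReal.ofReal_mul (Nat.cast_nonneg _), ENNReal.ofReal_natCast]
  · calc ∑ j ∈ Finset.univ.filter (fun j => ¬ (β j : ℕ) < M), T j
        = ∑ j ∈ Finset.univ.filter (fun j => ¬ (β j : ℕ) < M),
            ENNReal.ofReal (|h (x j.succ) - h (x j.castSucc)| / l (((β j : ℕ) - M) + M)) := by
          refine Finset.sum_congr rfl fun j hj => ?_
          rw [Nat.sub_add_cancel (not_lt.1 (Finset.mem_filter.1 hj).2)]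
      _ ≤ lamVar (fun n => l (n + M)) h := by
          refine sum_le_lamVar _ (fun i hi j hj hij => β.injective (Fin.ext ?_))
            (fun j _ => (hx01 _).1) (fun j _ => hx (Fin.castSucc_le_succ j))
            (fun j _ => (hx01 _).2) fun i _ j _ hij => hx (Fin.le_def.2 (by simp; omega))
          have := (Finset.mem_filter.1 hi).2
          have := (Finset.mem_filter.1 hj).2
          omega

end UpperBound

section Interpolation

/-- The index `P` of the grid cell `[P / N, (P + 1) / N]` containing `y ∈ [0, 1]`; the point `1`
counts in the last cell `P = N - 1`. -/
noncomputable def cell (N : ℕ) (y : ℝ) : ℕ := min ⌊N * y⌋₊ (N - 1)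

theorem cell_le (N : ℕ) (y : ℝ) : cell N y ≤ N - 1 := min_le_right _ _

theorem cell_mono (N : ℕ) : Monotone (cell N) := fun _ _ hyz =>
  min_le_min_right _ (Nat.floor_le_floor (mul_le_mul_of_nonneg_left hyz N.cast_nonneg))

theorem cell_le_mul {N : ℕ} {y : ℝ} (hy : 0 ≤ y) : (cell N y : ℝ) ≤ N * y :=
  (Nat.cast_le.2 (min_le_left _ _)).trans (Nat.floor_le (by positivity))

theorem mul_le_cell_add_one {N : ℕ} (hN : 1 ≤ N) {y : ℝ} (hy : y ≤ 1) :
    N * y ≤ cell N y + 1 := by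
  rcases le_total ⌊N * y⌋₊ (N - 1) with h | h
  · rw [cell, min_eq_left h]
    exact (Nat.lt_floor_add_one _).le
  · rw [cell, min_eq_right h, Nat.cast_sub hN, Nat.cast_one, sub_add_cancel]
    exact mul_le_of_le_one_right N.cast_nonneg hy

noncomputable def pwlInterp (N : ℕ) (v : ℕ → ℝ) (y : ℝ) : ℝ :=
  ∑ i ∈ Finset.range (N + 1), v i * max 0 (1 - |N * y - i|)

theorem continuous_pwlInterp (N : ℕ) (v : ℕ → ℝ) : Continuous (pwlInterp N v) := by
  unfold pwlInterp
  fun_prop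

theorem pwlInterp_sub (N : ℕ) (v w : ℕ → ℝ) (y : ℝ) :
    pwlInterp N (fun i => v i - w i) y = pwlInterp N v y - pwlInterp N w y := by
  simp only [pwlInterp, sub_mul, Finset.sum_sub_distrib]

theorem pwlInterp_apply_zero (N : ℕ) (v : ℕ → ℝ) : pwlInterp N v 0 = v 0 := by
  rw [pwlInterp, Finset.sum_eq_single 0 (fun i _ hi => ?_) (by simp)]
  · simp
  · have : (1 : ℝ) ≤ i := Nat.one_le_cast.2 (Nat.pos_of_ne_zero hi)
    simp [abs_of_nonneg (show (0 : ℝ) ≤ i by positivity), this]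

theorem abs_pwlInterp_sub_le (N : ℕ) (v : ℕ → ℝ) (y z : ℝ) :
    |pwlInterp N v y - pwlInterp N v z| ≤
      (N * ∑ i ∈ Finset.range (N + 1), |v i|) * |y - z| := by
  have hhat (i : ℕ) : |max 0 (1 - |N * y - i|) - max 0 (1 - |N * z - i|)| ≤ N * |y - z| :=
    calc |max 0 (1 - |N * y - i|) - max 0 (1 - |N * z - i|)|
        ≤ |(1 - |N * y - i|) - (1 - |N * z - i|)| := by
          simpa only [max_comm (0 : ℝ)] using abs_max_sub_max_le_abs _ _ (0 : ℝ)
      _ = |(|N * z - i|) - (|N * y - i|)| := by ring_nf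
      _ ≤ |(N * z - i) - (N * y - i)| := abs_abs_sub_abs_le_abs_sub _ _
      _ = N * |y - z| := by
          rw [show (N : ℝ) * z - i - (N * y - i) = N * (z - y) by ring, abs_mul, Nat.abs_cast,
            abs_sub_comm]
  rw [pwlInterp, pwlInterp, ← Finset.sum_sub_distrib]
  calc _ ≤ ∑ i ∈ Finset.range (N + 1), |v i| * (N * |y - z|) :=
        (Finset.abs_sum_le_sum_abs _ _).trans <| Finset.sum_le_sum fun i _ => by
          rw [← mul_sub, abs_mul]
          exact mul_le_mul_of_nonneg_left (hhat i) (abs_nonneg _)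
    _ = _ := by rw [← Finset.sum_mul]; ring

theorem pwlInterp_eq_of_le_of_le {N : ℕ} (v : ℕ → ℝ) {i : ℕ} (hi : i + 1 ≤ N) {y : ℝ}
    (hy : (i : ℝ) ≤ N * y) (hy' : N * y ≤ i + 1) :
    pwlInterp N v y = v i + (N * y - i) * (v (i + 1) - v i) := by
  rw [pwlInterp, Finset.sum_eq_add_of_mem i (i + 1) (by simp; omega) (by simp; omega)
    (by omega) fun j _ hj => ?_]
  · rw [abs_of_nonneg (by linarith : (0 : ℝ) ≤ N * y - i),
      abs_of_nonpos (by push_cast; linarith : (N : ℝ) * y - (i + 1 : ℕ) ≤ 0),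
      max_eq_right (by linarith), max_eq_right (by push_cast; linarith)]
    push_cast
    ring
  · have : (1 : ℝ) ≤ |N * y - j| := by
      rcases lt_or_gt_of_ne hj.1 with hji | hji
      · have : (j : ℝ) + 1 ≤ i := by exact_mod_cast hji
        exact le_abs.2 (Or.inl (by linarith))
      · have : (i : ℝ) + 2 ≤ j := by exact_mod_cast (show i + 2 ≤ j by omega)
        exact le_abs.2 (Or.inr (by linarith))
    rw [max_eq_left (by linarith), mul_zero]

theorem pwlInterp_eq_cell {N : ℕ} (hN : 1 ≤ N) (v : ℕ → ℝ) {y : ℝ} (hy : y ∈ Icc (0 : ℝ) 1) :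
    pwlInterp N v y = v (cell N y) + (N * y - cell N y) * (v (cell N y + 1) - v (cell N y)) :=
  pwlInterp_eq_of_le_of_le v (by have := cell_le N y; omega) (cell_le_mul hy.1)
    (mul_le_cell_add_one hN hy.2)

end Interpolation

section InterpolantBounds

variable {l : ℕ → ℝ} {N : ℕ}

theorem mul_sub_cell_mem_Icc (hN : 1 ≤ N) {y : ℝ} (hy : y ∈ Icc (0 : ℝ) 1) :
    N * y - cell N y ∈ Icc (0 : ℝ) 1 :=
  ⟨sub_nonneg.2 (cell_le_mul hy.1), by linarith [mul_le_cell_add_one hN hy.2]⟩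

theorem abs_sub_pwlInterp_le (hN : 1 ≤ N) {f : ℝ → ℝ} {ω : ℝ}
    (hω : ∀ u ∈ Icc (0 : ℝ) 1, ∀ u' ∈ Icc (0 : ℝ) 1, |u - u'| ≤ 1 / N → |f u - f u'| ≤ ω)
    {y : ℝ} (hy : y ∈ Icc (0 : ℝ) 1) :
    |f y - pwlInterp N (fun i => f (i / N)) y| ≤ ω := by
  have hN₀ : (0 : ℝ) < N := by exact_mod_cast hN
  set P := cell N y
  set θ := N * y - P
  obtain ⟨hθ₀, hθ₁⟩ := mul_sub_cell_mem_Icc hN hy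
  have hPN : P + 1 ≤ N := by have := cell_le N y; omega
  have hP : (P : ℝ) / N ∈ Icc (0 : ℝ) 1 :=
    ⟨by positivity, (div_le_one hN₀).2 (by exact_mod_cast (show P ≤ N by omega))⟩
  have hP₁ : ((P + 1 : ℕ) : ℝ) / N ∈ Icc (0 : ℝ) 1 :=
    ⟨by positivity, (div_le_one hN₀).2 (by exact_mod_cast hPN)⟩
  have h₁ : |f y - f (P / N)| ≤ ω := by
    refine hω _ hy _ hP ?_
    rw [show y - P / N = θ / N by field_simp; ring, abs_of_nonneg (by positivity)]
    gcongr
  have h₂ : |f y - f ((P + 1 : ℕ) / N)| ≤ ω := by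
    refine hω _ hy _ hP₁ ?_
    rw [show y - ((P + 1 : ℕ) : ℝ) / N = -((1 - θ) / N) by push_cast; field_simp; ring, abs_neg,
      abs_of_nonneg (div_nonneg (by linarith) hN₀.le)]
    gcongr
    linarith
  have hsplit : f y - pwlInterp N (fun i => f (i / N)) y
      = (1 - θ) * (f y - f (P / N)) + θ * (f y - f ((P + 1 : ℕ) / N)) := by
    rw [pwlInterp_eq_cell hN _ hy]
    ring
  calc |f y - pwlInterp N (fun i => f (i / N)) y|
      ≤ (1 - θ) * ω + θ * ω := by
        rw [hsplit]
        refine (abs_add_le _ _).trans (add_le_add ?_ ?_)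
        · rw [abs_mul, abs_of_nonneg (by linarith)]
          exact mul_le_mul_of_nonneg_left h₁ (by linarith)
        · rw [abs_mul, abs_of_nonneg hθ₀]
          exact mul_le_mul_of_nonneg_left h₂ hθ₀
    _ = ω := by ring

theorem pwlInterp_sub_of_cell_eq (hN : 1 ≤ N) (v : ℕ → ℝ) {a b : ℝ} (ha : a ∈ Icc (0 : ℝ) 1)
    (hb : b ∈ Icc (0 : ℝ) 1) (hab : cell N a = cell N b) :
    pwlInterp N v b - pwlInterp N v a = N * (b - a) * (v (cell N a + 1) - v (cell N a)) := by
  rw [pwlInterp_eq_cell hN v ha, pwlInterp_eq_cell hN v hb, ← hab]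
  ring

theorem abs_pwlInterp_sub_le_cell (hN : 1 ≤ N) (v : ℕ → ℝ) {a b : ℝ} (ha : a ∈ Icc (0 : ℝ) 1)
    (hb : b ∈ Icc (0 : ℝ) 1) :
    |pwlInterp N v b - pwlInterp N v a| ≤ |v (cell N b + 1) - v (cell N b)|
      + |v (cell N b) - v (cell N a + 1)| + |v (cell N a + 1) - v (cell N a)| := by
  obtain ⟨hθa₀, hθa₁⟩ := mul_sub_cell_mem_Icc hN ha
  obtain ⟨hθb₀, hθb₁⟩ := mul_sub_cell_mem_Icc hN hb
  have hscale {θ : ℝ} (hθ₀ : 0 ≤ θ) (hθ₁ : θ ≤ 1) (d : ℝ) : |θ * d| ≤ |d| := by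
    rw [abs_mul, abs_of_nonneg hθ₀]
    exact mul_le_of_le_one_left (abs_nonneg d) hθ₁
  rw [pwlInterp_eq_cell hN v ha, pwlInterp_eq_cell hN v hb]
  calc _ = |(N * b - cell N b) * (v (cell N b + 1) - v (cell N b))
          + (v (cell N b) - v (cell N a + 1))
          + (1 - (N * a - cell N a)) * (v (cell N a + 1) - v (cell N a))| := by ring_nf
    _ ≤ _ := by
        refine (abs_add_le _ _).trans (add_le_add ((abs_add_le _ _).trans ?_) ?_)
        · exact add_le_add_left (hscale hθb₀ hθb₁ _) _
        · exact hscale (by linarith) (by linarith) _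

theorem sum_grid_le_lamVar (f : ℝ → ℝ) {ι : Type*} [LinearOrder ι] (s : Finset ι)
    {c d w : ι → ℕ} (hw : InjOn w s) (hcd : ∀ i ∈ s, c i ≤ d i) (hdN : ∀ i ∈ s, d i ≤ N)
    (hchain : ∀ i ∈ s, ∀ j ∈ s, i < j → d i ≤ c j) :
    ∑ i ∈ s, ENNReal.ofReal (|f (d i / N) - f (c i / N)| / l (w i)) ≤ lamVar l f :=
  sum_le_lamVar s hw (fun _ _ => by positivity)
    (fun i hi => by gcongr; exact_mod_cast hcd i hi)
    (fun i hi => div_le_one_of_le₀ (by exact_mod_cast hdN i hi) (by positivity))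
    fun i hi j hj hij => by gcongr; exact_mod_cast hchain i hi j hj hij

end InterpolantBounds

section InterpolantVariation

variable {l : ℕ → ℝ} {N m : ℕ} {x : Fin (m + 1) → ℝ}

theorem sum_gaps_in_cell_le (hl : Monotone l) (hl₀ : 0 < l 0) (hN : 1 ≤ N) (v : ℕ → ℝ)
    (hx : Monotone x) (hx01 : ∀ j, x j ∈ Icc (0 : ℝ) 1) (β : Equiv.Perm (Fin m))
    {s : Finset (Fin m)} {P n : ℕ}
    (hs : ∀ j ∈ s, cell N (x j.castSucc) = P ∧ cell N (x j.succ) = P)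
    (hn : ∀ j ∈ s, n ≤ β j) :
    ∑ j ∈ s, ENNReal.ofReal
        (|pwlInterp N v (x j.succ) - pwlInterp N v (x j.castSucc)| / l (β j))
      ≤ ENNReal.ofReal (|v (P + 1) - v P| / l n) := by
  have hN₀ : (0 : ℝ) < N := by exact_mod_cast hN
  have hln : 0 < l n := hl₀.trans_le (hl (Nat.zero_le n))
  have hgap (j : Fin m) : 0 ≤ x j.succ - x j.castSucc :=
    sub_nonneg.2 (hx (Fin.castSucc_le_succ j))
  have hlen : ∑ j ∈ s, (x j.succ - x j.castSucc) ≤ ((P : ℝ) + 1) / N - P / N := by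
    refine sum_sub_le_of_pairwiseDisjoint (by gcongr; linarith) (fun j hj => ?_)
      (fun j _ => sub_nonneg.1 (hgap j)) (fun j hj => ?_) (pairwiseDisjoint_Ioo_of_monotone hx _)
    · rw [div_le_iff₀' hN₀, ← (hs j hj).1]
      exact cell_le_mul (hx01 _).1
    · rw [le_div_iff₀' hN₀, ← (hs j hj).2]
      exact mul_le_cell_add_one hN (hx01 _).2
  have hNlen : N * ∑ j ∈ s, (x j.succ - x j.castSucc) ≤ 1 := by
    calc _ ≤ (N : ℝ) * (((P : ℝ) + 1) / N - P / N) := by gcongr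
      _ = 1 := by field_simp; ring
  calc _ ≤ ∑ j ∈ s, ENNReal.ofReal (N * (x j.succ - x j.castSucc) * |v (P + 1) - v P| / l n) := by
        refine Finset.sum_le_sum fun j hj => ENNReal.ofReal_le_ofReal ?_
        rw [pwlInterp_sub_of_cell_eq hN v (hx01 _) (hx01 _) ((hs j hj).1.trans (hs j hj).2.symm),
          (hs j hj).1, abs_mul, abs_mul, Nat.abs_cast, abs_of_nonneg (hgap j)]
        have := hgap j
        exact div_le_div_of_nonneg_left (by positivity) hln (hl (hn j hj))
    _ = ENNReal.ofReal (N * (∑ j ∈ s, (x j.succ - x j.castSucc)) * |v (P + 1) - v P| / l n) := by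
        rw [← ENNReal.ofReal_sum_of_nonneg fun j _ => by have := hgap j; positivity,
          Finset.mul_sum, Finset.sum_mul, Finset.sum_div]
    _ ≤ ENNReal.ofReal (|v (P + 1) - v P| / l n) := by
        gcongr
        exact mul_le_of_le_one_left (abs_nonneg _) hNlen

/-- Each cell gets the smallest weight index among its gaps, so distinct cells get distinct
weights. -/
theorem sum_sameCell_le_lamVar (hl : Monotone l) (hl₀ : 0 < l 0) (hN : 1 ≤ N) (f : ℝ → ℝ)
    (hx : Monotone x) (hx01 : ∀ j, x j ∈ Icc (0 : ℝ) 1) (β : Equiv.Perm (Fin m)) :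
    ∑ j ∈ Finset.univ.filter (fun j : Fin m => cell N (x j.castSucc) = cell N (x j.succ)),
      ENNReal.ofReal (|pwlInterp N (fun i => f (i / N)) (x j.succ)
        - pwlInterp N (fun i => f (i / N)) (x j.castSucc)| / l (β j)) ≤ lamVar l f := by
  set S := Finset.univ.filter (fun j : Fin m => cell N (x j.castSucc) = cell N (x j.succ))
  set C : Fin m → ℕ := fun j => cell N (x j.castSucc)
  let w : ℕ → ℕ := fun P => sInf ((fun j => (β j : ℕ)) '' {j | j ∈ S ∧ C j = P})
  have hw_le {j : Fin m} (hj : j ∈ S) : w (C j) ≤ β j := Nat.sInf_le ⟨j, ⟨hj, rfl⟩, rfl⟩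
  have hw_mem {P : ℕ} (hP : P ∈ S.image C) : ∃ j ∈ S, C j = P ∧ (β j : ℕ) = w P := by
    obtain ⟨j, hj, rfl⟩ := Finset.mem_image.1 hP
    have hne : ((fun j => (β j : ℕ)) '' {j' | j' ∈ S ∧ C j' = C j}).Nonempty :=
      ⟨_, j, ⟨hj, rfl⟩, rfl⟩
    obtain ⟨j', ⟨hj', hC⟩, hβ⟩ := Nat.sInf_mem hne
    exact ⟨j', hj', hC, hβ⟩
  rw [← Finset.sum_fiberwise_of_maps_to (t := S.image C) fun j hj => Finset.mem_image_of_mem C hj]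
  calc _ ≤ ∑ P ∈ S.image C, ENNReal.ofReal (|f ((P + 1 : ℕ) / N) - f (P / N)| / l (w P)) := by
        refine Finset.sum_le_sum fun P _ => sum_gaps_in_cell_le hl hl₀ hN _ hx hx01 β
          (fun j hj => ?_) fun j hj => ?_
        · obtain ⟨hjS, hjP⟩ := Finset.mem_filter.1 hj
          exact ⟨hjP, (Finset.mem_filter.1 hjS).2.symm.trans hjP⟩
        · obtain ⟨hjS, rfl⟩ := Finset.mem_filter.1 hj
          exact hw_le hjS
    _ ≤ lamVar l f := by
        refine sum_grid_le_lamVar (c := id) (d := (· + 1)) f _ (fun P hP P' hP' hPP' => ?_)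
          (fun _ _ => Nat.le_succ _) (fun P hP => ?_) fun P _ P' _ h => h
        · obtain ⟨j, -, rfl, hj⟩ := hw_mem hP
          obtain ⟨j', -, rfl, hj'⟩ := hw_mem hP'
          rw [β.injective (Fin.ext (hj.trans (hPP'.trans hj'.symm)))]
        · obtain ⟨j, -, rfl⟩ := Finset.mem_image.1 hP
          have := cell_le N (x j.castSucc)
          simp only [C]
          omega

theorem sum_crossCell_le_lamVar (hl : Monotone l) (hl₀ : 0 < l 0) (hN : 1 ≤ N) (f : ℝ → ℝ)
    (hx : Monotone x) (hx01 : ∀ j, x j ∈ Icc (0 : ℝ) 1) (β : Equiv.Perm (Fin m)) :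
    ∑ j ∈ Finset.univ.filter (fun j : Fin m => ¬ cell N (x j.castSucc) = cell N (x j.succ)),
      ENNReal.ofReal (|pwlInterp N (fun i => f (i / N)) (x j.succ)
        - pwlInterp N (fun i => f (i / N)) (x j.castSucc)| / l (β j)) ≤ 3 * lamVar l f := by
  set S := Finset.univ.filter (fun j : Fin m => ¬ cell N (x j.castSucc) = cell N (x j.succ))
  set P : Fin m → ℕ := fun j => cell N (x j.castSucc)
  set Q : Fin m → ℕ := fun j => cell N (x j.succ)
  set T : ℕ → ℕ → Fin m → ℝ≥0∞ := fun c d j =>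
    ENNReal.ofReal (|f (d / N) - f (c / N)| / l (β j))
  have hPQ {j : Fin m} (hj : j ∈ S) : P j < Q j :=
    (cell_mono N (hx (Fin.castSucc_le_succ j))).lt_of_ne (Finset.mem_filter.1 hj).2
  have hQP {i j : Fin m} (hij : i < j) : Q i ≤ P j :=
    cell_mono N (hx (Fin.le_def.2 (by simp; omega)))
  have hQN (j : Fin m) : Q j + 1 ≤ N := by
    show cell N (x j.succ) + 1 ≤ N
    have := cell_le N (x j.succ)
    omega
  have hβ : InjOn (fun j => (β j : ℕ)) S := fun i _ j _ hij => β.injective (Fin.ext hij)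
  calc _ ≤ ∑ j ∈ S, (T (Q j) (Q j + 1) j + T (P j + 1) (Q j) j + T (P j) (P j + 1) j) := by
        refine Finset.sum_le_sum fun j _ => ?_
        have hlj : 0 < l (β j) := hl₀.trans_le (hl (Nat.zero_le _))
        refine (ENNReal.ofReal_le_ofReal (div_le_div_of_nonneg_right
          (abs_pwlInterp_sub_le_cell hN _ (hx01 _) (hx01 _)) hlj.le)).trans ?_
        rw [add_div, add_div]
        exact ENNReal.ofReal_add_le.trans (add_le_add_left ENNReal.ofReal_add_le _)
    _ = ∑ j ∈ S, T (Q j) (Q j + 1) j + ∑ j ∈ S, T (P j + 1) (Q j) j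
          + ∑ j ∈ S, T (P j) (P j + 1) j := by
        rw [Finset.sum_add_distrib, Finset.sum_add_distrib]
    _ ≤ lamVar l f + lamVar l f + lamVar l f := by
        gcongr
        · exact sum_grid_le_lamVar f S hβ (fun _ _ => Nat.le_succ _) (fun j _ => hQN j)
            fun i _ j hj hij => by have := hQP hij; have := hPQ hj; omega
        · exact sum_grid_le_lamVar f S hβ (fun j hj => hPQ hj) (fun j _ => (hQN j).trans' (by omega))
            fun i _ j _ hij => by have := hQP hij; omega
        · exact sum_grid_le_lamVar f S hβ (fun _ _ => Nat.le_succ _)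
            (fun j hj => (hQN j).trans' (by have := hPQ hj; omega))
            fun i hi j _ hij => by have := hQP hij; have := hPQ hi; omega
    _ = 3 * lamVar l f := by ring

theorem lamVar_pwlInterp_le (hl : Monotone l) (hl₀ : 0 < l 0) (hN : 1 ≤ N) (f : ℝ → ℝ) :
    lamVar l (pwlInterp N fun i => f (i / N)) ≤ 4 * lamVar l f := by
  refine lamVar_le fun m x hx hx01 β => ?_
  rw [← Finset.sum_filter_add_sum_filter_not _
    (fun j : Fin m => cell N (x j.castSucc) = cell N (x j.succ))]
  calc _ ≤ lamVar l f + 3 * lamVar l f :=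
        add_le_add (sum_sameCell_le_lamVar hl hl₀ hN f hx hx01 β)
          (sum_crossCell_le_lamVar hl hl₀ hN f hx hx01 β)
    _ = 4 * lamVar l f := by ring

end InterpolantVariation

section Approximation

variable {l : ℕ → ℝ}

theorem pwlInterp_mem (hl : IsProperLambdaSeq l) (N : ℕ) (v : ℕ → ℝ) :
    ContinuousOn (pwlInterp N v) (Icc 0 1) ∧ lamVar l (pwlInterp N v) < ⊤ ∧
      ContInLamVar l (pwlInterp N v) := by
  have hK : (0 : ℝ) ≤ N * ∑ i ∈ Finset.range (N + 1), |v i| := by positivity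
  have hlip := fun y (_ : y ∈ Icc (0 : ℝ) 1) z (_ : z ∈ Icc (0 : ℝ) 1) =>
    abs_pwlInterp_sub_le N v y z
  exact ⟨(continuous_pwlInterp N v).continuousOn,
    (lamVar_le_of_abs_sub_le hl.1.1 (hl.1.2.1 0) hK hlip).trans_lt ENNReal.ofReal_lt_top,
    contInLamVar_of_abs_sub_le hl hK hlip⟩

theorem lamNorm_sub_le (f g : ℝ → ℝ) :
    lamNorm l (fun y => f y - g y) ≤ lamNorm l f + lamNorm l g := by
  rw [lamNorm, lamNorm, lamNorm, add_add_add_comm]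
  exact add_le_add (lamVar_sub_le f g)
    ((ENNReal.ofReal_le_ofReal (abs_sub _ _)).trans ENNReal.ofReal_add_le)

theorem exists_lamNorm_pwlInterp_lt (hl : Monotone l) (hl₀ : 0 < l 0) (N : ℕ) {ε : ℝ}
    (hε : 0 < ε) : ∃ η > 0, ∀ v : ℕ → ℝ, (∀ i ≤ N, |v i| < η) →
      lamNorm l (pwlInterp N v) < ENNReal.ofReal ε := by
  set C : ℝ := N * (N + 1) / l 0 + 1
  have hC : 1 ≤ C := le_add_of_nonneg_left (by positivity)
  refine ⟨ε / (2 * C), by positivity, fun v hv => ?_⟩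
  set η := ε / (2 * C)
  have hη₀ : η ≤ ε / 2 := div_le_div_of_nonneg_left hε.le two_pos (by linarith)
  have hηN : N * ((N + 1) * η) / l 0 ≤ ε / 2 :=
    calc N * ((N + 1) * η) / l 0 = N * (N + 1) / l 0 * η := by ring
      _ ≤ C * η := by gcongr; linarith
      _ = ε / 2 := by simp only [η]; field_simp
  have hsum : ∑ i ∈ Finset.range (N + 1), |v i| ≤ (N + 1) * η := by
    simpa using Finset.sum_le_card_nsmul _ _ η fun i hi =>
      (hv i (Nat.lt_succ_iff.1 (Finset.mem_range.1 hi))).le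
  have hvar : lamVar l (pwlInterp N v) ≤ ENNReal.ofReal (ε / 2) :=
    (lamVar_le_of_abs_sub_le hl hl₀ (by positivity)
      fun y _ z _ => abs_pwlInterp_sub_le N v y z).trans
      (ENNReal.ofReal_le_ofReal (le_trans (by gcongr) hηN))
  calc lamNorm l (pwlInterp N v) < ENNReal.ofReal (ε / 2) + ENNReal.ofReal (ε / 2) := by
        rw [lamNorm, pwlInterp_apply_zero]
        exact ENNReal.add_lt_add_of_le_of_lt (hvar.trans_lt ENNReal.ofReal_lt_top).ne hvar
          ((ENNReal.ofReal_lt_ofReal_iff (half_pos hε)).2 ((hv 0 (Nat.zero_le N)).trans_le hη₀))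
    _ = ENNReal.ofReal ε := by rw [← ENNReal.ofReal_add (by positivity) (by positivity), add_halves]

theorem exists_lamNorm_sub_pwlInterp_lt (hl : Monotone l) (hl₀ : 0 < l 0) {f : ℝ → ℝ}
    (hf : ContinuousOn f (Icc 0 1)) (hfΛ : ContInLamVar l f) {ε : ℝ} (hε : 0 < ε) :
    ∃ N, lamNorm l (fun y => f y - pwlInterp N (fun i => f (i / N)) y) < ENNReal.ofReal ε := by
  obtain ⟨M, hM⟩ :=
    (ENNReal.tendsto_nhds_zero.1 hfΛ (ENNReal.ofReal (ε / 10)) (by positivity)).exists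
  set ω := ε * l 0 / (4 * (M + 1))
  obtain ⟨δ, hδ, hfδ⟩ := Metric.uniformContinuousOn_iff.1
    (isCompact_Icc.uniformContinuousOn_of_continuous hf) ω (by positivity)
  obtain ⟨n, hn⟩ := exists_nat_one_div_lt hδ
  refine ⟨n + 1, ?_⟩
  have hsup (y : ℝ) (hy : y ∈ Icc (0 : ℝ) 1) :
      |f y - pwlInterp (n + 1) (fun i => f (i / ↑(n + 1))) y| ≤ ω :=
    abs_sub_pwlInterp_le (Nat.le_add_left 1 n) (fun u hu u' hu' huu' =>
      (hfδ u hu u' hu' (by rw [Real.dist_eq]; push_cast at huu' ⊢; linarith)).le) hy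
  have hlM : Monotone fun k => l (k + M) := fun a b hab => hl (by omega)
  have hlM₀ : 0 < l (0 + M) := hl₀.trans_le (hl (Nat.zero_le _))
  rw [lamNorm, pwlInterp_apply_zero, Nat.cast_zero, zero_div, sub_self, abs_zero, ENNReal.ofReal_zero,
    add_zero]
  calc _ ≤ ENNReal.ofReal (M * (2 * ω / l 0))
          + (lamVar (fun k => l (k + M)) f + 4 * lamVar (fun k => l (k + M)) f) :=
        (lamVar_le_of_abs_le hl hl₀ hsup M).trans <| add_le_add le_rfl <| (lamVar_sub_le _ _).trans
          (add_le_add le_rfl (lamVar_pwlInterp_le hlM hlM₀ (Nat.le_add_left 1 n) f))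
    _ ≤ ENNReal.ofReal (M * (2 * ω / l 0)) + (ENNReal.ofReal (ε / 10) + 4 * ENNReal.ofReal (ε / 10)) := by
        gcongr
    _ = ENNReal.ofReal (M * (2 * ω / l 0) + ε / 2) := by
        rw [← ENNReal.ofReal_ofNat 4, ← ENNReal.ofReal_mul (by norm_num),
          ← ENNReal.ofReal_add (by positivity) (by positivity),
          ← ENNReal.ofReal_add (by positivity) (by positivity)]
        ring_nf
    _ < ENNReal.ofReal ε := by
        rw [ENNReal.ofReal_lt_ofReal_iff hε]
        have : M * (2 * ω / l 0) = ε / 2 * (M / (M + 1)) := by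
          simp only [ω]; field_simp; ring
        rw [this]
        have : (M : ℝ) / (M + 1) < 1 := (div_lt_one (by positivity)).2 (by linarith)
        nlinarith

end Approximation

/-- For every proper Λ-sequence `Λ`, the space `CΛBV_c` is separable in the
`‖·‖_Λ` norm. -/
theorem cLamBVc_separable (l : ℕ → ℝ) (hl : IsProperLambdaSeq l) :
    ∃ D : Set (ℝ → ℝ), D.Countable ∧
      (∀ g ∈ D, ContinuousOn g (Set.Icc 0 1) ∧ lamVar l g < ⊤ ∧ ContInLamVar l g) ∧
      ∀ f : ℝ → ℝ, ContinuousOn f (Set.Icc 0 1) → lamVar l f < ⊤ → ContInLamVar l f →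
        ∀ ε : ℝ, 0 < ε → ∃ g ∈ D,
          lamNorm l (fun x => f x - g x) < ENNReal.ofReal ε := by
  have hl₀ : 0 < l 0 := hl.1.2.1 0
  refine ⟨range fun p : Σ N : ℕ, Fin (N + 1) → ℚ =>
    pwlInterp p.1 fun i => if h : i < p.1 + 1 then (p.2 ⟨i, h⟩ : ℝ) else 0,
    countable_range _, fun _ ⟨p, hp⟩ => hp ▸ pwlInterp_mem hl _ _, ?_⟩
  intro f hf _ hfΛ ε hε
  obtain ⟨N, hfN⟩ := exists_lamNorm_sub_pwlInterp_lt hl.1.1 hl₀ hf hfΛ (half_pos hε)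
  obtain ⟨η, hη, hsmall⟩ := exists_lamNorm_pwlInterp_lt hl.1.1 hl₀ N (half_pos hε)
  choose q hq using fun i : ℕ => exists_rat_near (f (i / N)) hη
  refine ⟨_, ⟨⟨N, fun i => q i⟩, rfl⟩, ?_⟩
  set v : ℕ → ℝ := fun i => if h : i < N + 1 then (q i : ℝ) else 0
  set g₀ := pwlInterp N fun i => f (i / N)
  calc lamNorm l (fun y => f y - pwlInterp N v y)
      = lamNorm l (fun y => (f y - g₀ y) - pwlInterp N (fun i => v i - f (i / N)) y) := by
        simp only [g₀, pwlInterp_sub, sub_sub_sub_cancel_right]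
    _ ≤ lamNorm l (fun y => f y - g₀ y) + lamNorm l (pwlInterp N fun i => v i - f (i / N)) :=
        lamNorm_sub_le _ _
    _ < ENNReal.ofReal (ε / 2) + ENNReal.ofReal (ε / 2) := by
        refine ENNReal.add_lt_add hfN (hsmall _ fun i hi => ?_)
        rw [show v i = q i from dif_pos (Nat.lt_succ_of_le hi), abs_sub_comm]
        exact hq i
    _ = ENNReal.ofReal ε := by rw [← ENNReal.ofReal_add (by positivity) (by positivity), add_halves]
end
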